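/- arXiv:2009.13260 — 4 statements merged into one kernel-verified Lean document; each statement's English description precedes it below -/
import Mathlib

section
/- For all valuations v, v', every clock x, every constant d ∈ ℕ and every ◁ ∈ {<, ≤}: (i) v ⊑_{x ◁ d} v' if and only if v ⊭ x ◁ d or v'(x) ≤ v(x); (ii) v ⊑_{d ◁ x} v' if and only if v' ⊨ d ◁ x or v(x) ≤ v'(x). -/
open Classical

/-- Comparison operator `◁ ∈ {<, ≤}`. -/
inductive Ineq where
  | lt
  | le

def Ineq.holds : Ineq → ℝ → ℝ → Prop
  | .lt, a, b => a < b
  | .le, a, b => a ≤ b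

/-- Atomic constraints over a set `X` of clocks. -/
inductive AC (X : Type) where
  | tt
  | ff
  | upper (x : X) (o : Ineq) (c : ℕ)              -- x ◁ c
  | lower (c : ℕ) (o : Ineq) (x : X)              -- c ◁ x
  | dUpper (x y : X) (o : Ineq) (c : ℕ)           -- x - y ◁ c
  | dLower (c : ℕ) (o : Ineq) (x y : X)           -- c ◁ x - y

/-- A valuation maps clocks to nonnegative reals. -/
abbrev Val (X : Type) := X → NNReal

def AC.sat {X : Type} (v : Val X) : AC X → Prop
  | .tt => True
  | .ff => False
  | .upper x o c => o.holds (v x : ℝ) (c : ℝ)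
  | .lower c o x => o.holds (c : ℝ) (v x : ℝ)
  | .dUpper x y o c => o.holds ((v x : ℝ) - (v y : ℝ)) (c : ℝ)
  | .dLower c o x y => o.holds (c : ℝ) ((v x : ℝ) - (v y : ℝ))

/-- A constraint (guard) is a finite conjunction of atomic constraints. -/
abbrev Guard (X : Type) := List (AC X)

def satG {X : Type} (v : Val X) (g : Guard X) : Prop := ∀ φ ∈ g, AC.sat v φ

/-- The valuation `v + δ`. -/
def delay {X : Type} (v : Val X) (δ : NNReal) : Val X := fun x => v x + δ

/-- `v ⊑_G v'` for a set `G` of atomic constraints. -/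
def simS {X : Type} (G : Set (AC X)) (v v' : Val X) : Prop :=
  ∀ δ : NNReal, ∀ φ ∈ G, AC.sat (delay v δ) φ → AC.sat (delay v' δ) φ

/-- `v ⊑_φ v'` for a single constraint `φ` (a conjunction of atomic constraints). -/
def simC {X : Type} (g : Guard X) (v v' : Val X) : Prop :=
  ∀ δ : NNReal, satG (delay v δ) g → satG (delay v' δ) g

/-- Right-hand side of an atomic update: `x := c` or `x := y + d`. -/
inductive Rhs (X : Type) where
  | const (c : ℕ)
  | clock (y : X) (d : ℤ)

/-- An update assigns a right-hand side to every clock. -/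
abbrev Update (X : Type) := X → Rhs X

def Rhs.eval {X : Type} (v : Val X) : Rhs X → ℝ
  | .const c => (c : ℝ)
  | .clock y d => (v y : ℝ) + (d : ℝ)

/-- `up(v) ≥ 0`. -/
def Update.nonneg {X : Type} (up : Update X) (v : Val X) : Prop :=
  ∀ x, 0 ≤ Rhs.eval v (up x)

/-- The valuation `up(v)` (meaningful when `up.nonneg v`). -/
noncomputable def Update.app {X : Type} (up : Update X) (v : Val X) : Val X :=
  fun x => Real.toNNReal (Rhs.eval v (up x))

/-- `up⁻¹(φ)` for an atomic constraint `φ`: simultaneous substitution of `up_x` for `x`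
rewritten to an equivalent atomic constraint (possibly ⊤ or ⊥). -/
noncomputable def upInvA {X : Type} (up : Update X) : AC X → AC X
  | .tt => .tt
  | .ff => .ff
  | .upper x o c =>
      match up x with
      | .const a => if o.holds (a : ℝ) (c : ℝ) then .tt else .ff
      | .clock y d => if (c : ℤ) - d < 0 then .ff else .upper y o ((c : ℤ) - d).toNat
  | .lower c o x =>
      match up x with
      | .const a => if o.holds (c : ℝ) (a : ℝ) then .tt else .ff
      | .clock y d => if (c : ℤ) - d < 0 then .tt else .lower ((c : ℤ) - d).toNat o y
  | .dUpper x y o c =>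
      match up x, up y with
      | .const a, .const b => if o.holds ((a : ℝ) - (b : ℝ)) (c : ℝ) then .tt else .ff
      | .const a, .clock z e =>
          if (a : ℤ) - e - (c : ℤ) < 0 then .tt
          else .lower ((a : ℤ) - e - (c : ℤ)).toNat o z
      | .clock z e, .const b =>
          if (c : ℤ) + (b : ℤ) - e < 0 then .ff
          else .upper z o ((c : ℤ) + (b : ℤ) - e).toNat
      | .clock z e, .clock w f =>
          if (c : ℤ) - e + f < 0 then .dLower (-((c : ℤ) - e + f)).toNat o w z
          else .dUpper z w o ((c : ℤ) - e + f).toNat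
  | .dLower c o x y =>
      match up x, up y with
      | .const a, .const b => if o.holds (c : ℝ) ((a : ℝ) - (b : ℝ)) then .tt else .ff
      | .const a, .clock z e =>
          if (a : ℤ) - e - (c : ℤ) < 0 then .ff
          else .upper z o ((a : ℤ) - e - (c : ℤ)).toNat
      | .clock z e, .const b =>
          if (c : ℤ) + (b : ℤ) - e < 0 then .tt
          else .lower ((c : ℤ) + (b : ℤ) - e).toNat o z
      | .clock z e, .clock w f =>
          if (c : ℤ) - e + f < 0 then .dUpper w z o (-((c : ℤ) - e + f)).toNat
          else .dLower ((c : ℤ) - e + f).toNat o z w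

/-- `up⁻¹` of a conjunction of atomic constraints. -/
noncomputable def upInvC {X : Type} (up : Update X) (g : Guard X) : Guard X :=
  g.map (upInvA up)

/-- The guard `g` contains an upper-bound constraint `x ◁₁ c` on clock `x`. -/
def hasUpperG {X : Type} (g : Guard X) (x : X) : Prop := ∃ o c, AC.upper x o c ∈ g

/-- The smallest constant of an upper-bound constraint on `x` in `g`. -/
noncomputable def minUpperG {X : Type} (g : Guard X) (x : X) : ℕ :=
  sInf {c | ∃ o, AC.upper x o c ∈ g}

/-- Condition of Case 3 of the table defining `wp`. -/
def case3G {X : Type} (g : Guard X) (x y : X) (d : ℕ) : Prop :=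
  (∃ o c, AC.upper x o c ∈ g ∧ c < d) ∨
  (∃ o c, AC.dUpper x y o c ∈ g ∧ c < d) ∨
  (∃ o e, AC.dLower e o x y ∈ g ∧ d < e)

/-- The pre `wp(φ, g, up)` of an atomic constraint under a guard-update pair. -/
noncomputable def wp {X : Type} (φ : AC X) (g : Guard X) (up : Update X) : AC X :=
  match upInvA up φ with
  | .upper x o d => if hasUpperG g x then .tt else .upper x o d
  | .lower d o x =>
      if hasUpperG g x ∧ minUpperG g x < d then .lower (minUpperG g x) .le x
      else .lower d o x
  | .dUpper x y o d => if case3G g x y d then .tt else .dUpper x y o d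
  | .dLower d o x y => if case3G g x y d then .tt else .dLower d o x y
  | ψ => ψ

/-- A transition of an updatable timed automaton. -/
structure UTrans (Q X : Type) where
  src : Q
  guard : Guard X
  update : Update X
  tgt : Q

/-- An updatable timed automaton (UTA). -/
structure UTA (Q X : Type) where
  init : Q
  trans : List (UTrans Q X)
  acc : Set Q

/-- (Non-reduced) G-map. -/
def IsGMap {Q X : Type} (A : UTA Q X) (G : Q → Set (AC X)) : Prop :=
  ∀ t ∈ A.trans,
    (∀ φ ∈ t.guard, φ ∈ G t.src) ∧
    (∀ x : X, upInvA t.update (AC.lower 0 .le x) ∈ G t.src) ∧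
    (∀ φ ∈ G t.tgt, upInvA t.update φ ∈ G t.src)

/-- Reduced G-map. -/
def IsRedGMap {Q X : Type} (A : UTA Q X) (G : Q → Set (AC X)) : Prop :=
  ∀ t ∈ A.trans,
    (∀ φ ∈ t.guard, φ ∈ G t.src) ∧
    (∀ x : X, wp (AC.lower 0 .le x) t.guard t.update ∈ G t.src) ∧
    (∀ φ ∈ G t.tgt, wp φ t.guard t.update ∈ G t.src)

/-- Pointwise intersection of all G-maps: the smallest G-map. -/
def minGMap {Q X : Type} (A : UTA Q X) : Q → Set (AC X) :=
  fun q => ⋂ G ∈ {G | IsGMap A G}, G q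

/-- Pointwise intersection of all reduced G-maps: the smallest reduced G-map. -/
def minRedGMap {Q X : Type} (A : UTA Q X) : Q → Set (AC X) :=
  fun q => ⋂ G ∈ {G | IsRedGMap A G}, G q

/-- Action transition `(q, v) →t (q', up(v))` of the UTA semantics. -/
def actionStep {Q X : Type} (A : UTA Q X) (t : UTrans Q X) (c c' : Q × Val X) : Prop :=
  t ∈ A.trans ∧ c.1 = t.src ∧ c'.1 = t.tgt ∧ satG c.2 t.guard ∧
  t.update.nonneg c.2 ∧ c'.2 = t.update.app c.2

/-- A simulation on the UTA semantics: a preorder relating only configurations with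
the same state, preserved by delays and actions. -/
def IsSimulation {Q X : Type} (A : UTA Q X)
    (R : (Q × Val X) → (Q × Val X) → Prop) : Prop :=
  (∀ p, R p p) ∧
  (∀ p₁ p₂ p₃, R p₁ p₂ → R p₂ p₃ → R p₁ p₃) ∧
  (∀ p p', R p p' → p.1 = p'.1) ∧
  (∀ q (v v' : Val X) (δ : NNReal), R (q, v) (q, v') → R (q, delay v δ) (q, delay v' δ)) ∧
  (∀ q (v v' : Val X) t p₁, R (q, v) (q, v') → actionStep A t (q, v) p₁ →
      ∃ v₁', actionStep A t (q, v') (p₁.1, v₁') ∧ R p₁ (p₁.1, v₁'))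

/-- A run of a UTA: alternating delays and actions from the initial configuration. -/
def IsRun {Q X : Type} (A : UTA Q X) (n : ℕ) (qs : ℕ → Q) (ds : ℕ → NNReal)
    (vs : ℕ → Val X) : Prop :=
  qs 0 = A.init ∧ (∀ x, vs 0 x = 0) ∧
  ∀ i, i < n → ∃ t, actionStep A t (qs i, delay (vs i) (ds i)) (qs (i + 1), vs (i + 1))

/-- Configurations occurring on some run of the UTA. -/
def ReachCfg {Q X : Type} (A : UTA Q X) (p : Q × Val X) : Prop :=
  ∃ n qs ds vs, IsRun A n qs ds vs ∧ ∃ δ : NNReal, p.1 = qs n ∧ p.2 = delay (vs n) δ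

/-- Timed automaton with subtraction: every atomic update is `x := 0` or `x := x - c`. -/
def IsSubtractionTA {Q X : Type} (A : UTA Q X) : Prop :=
  ∀ t ∈ A.trans, ∀ x : X,
    t.update x = Rhs.const 0 ∨ ∃ c : ℕ, t.update x = Rhs.clock x (-(c : ℤ))

/-- Timed automaton with bounded subtraction with bounds `M`. -/
def IsBoundedSub {Q X : Type} (A : UTA Q X) (M : X → ℕ) : Prop :=
  IsSubtractionTA A ∧
  ∀ q v, ReachCfg A (q, v) → ∀ t ∈ A.trans, t.src = q → satG v t.guard →
    ∀ (x : X) (c : ℕ), 0 < c → t.update x = Rhs.clock x (-(c : ℤ)) → (v x : ℝ) ≤ (M x : ℝ)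

/-- Timed automaton with syntactically bounded subtraction. -/
def IsSynBoundedSub {Q X : Type} (A : UTA Q X) : Prop :=
  IsSubtractionTA A ∧
  ∀ t ∈ A.trans, ∀ (x : X) (c : ℕ), 0 < c → t.update x = Rhs.clock x (-(c : ℤ)) →
    ∃ o c', AC.upper x o c' ∈ t.guard

/-- The constant of an atomic constraint. -/
def AC.cst {X : Type} : AC X → ℕ
  | .tt => 0
  | .ff => 0
  | .upper _ _ c => c
  | .lower c _ _ => c
  | .dUpper _ _ _ c => c
  | .dLower c _ _ _ => c

/-- The constant occurring in the right-hand side of an atomic update. -/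
def Rhs.cst {X : Type} : Rhs X → ℕ
  | .const c => c
  | .clock _ d => d.natAbs

/-- Maximum constant occurring in the guards of a UTA. -/
def maxGuardConst {Q X : Type} (A : UTA Q X) : ℕ :=
  (A.trans.map fun t => (t.guard.map AC.cst).foldr max 0).foldr max 0

/-- Maximum absolute value of a constant occurring in the updates of a UTA. -/
noncomputable def maxUpdateConst {Q X : Type} [Fintype X] (A : UTA Q X) : ℕ :=
  (A.trans.map fun t => Finset.univ.sup fun x => Rhs.cst (t.update x)).foldr max 0

/-- `L(G)(x)`: maximum constant of a lower-bound constraint on `x` in `G` (⊥ = −∞ if none). -/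
noncomputable def Lb {X : Type} (G : Set (AC X)) (x : X) : WithBot ℕ∞ :=
  ⨆ c ∈ {c : ℕ | ∃ o, AC.lower c o x ∈ G}, ((c : ℕ∞) : WithBot ℕ∞)

/-- `U(G)(x)`: maximum constant of an upper-bound constraint on `x` in `G` (⊥ = −∞ if none). -/
noncomputable def Ub {X : Type} (G : Set (AC X)) (x : X) : WithBot ℕ∞ :=
  ⨆ c ∈ {c : ℕ | ∃ o, AC.upper x o c ∈ G}, ((c : ℕ∞) : WithBot ℕ∞)

def AC.isDiag {X : Type} : AC X → Prop
  | .dUpper _ _ _ _ => True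
  | .dLower _ _ _ _ => True
  | _ => False

/-- `G^d`: the diagonal constraints of `G`. -/
def diagOf {X : Type} (G : Set (AC X)) : Set (AC X) := {φ ∈ G | φ.isDiag}

def AC.isWeak {X : Type} : AC X → Prop
  | .upper _ o _ => o = .le
  | .lower _ o _ => o = .le
  | .dUpper _ _ o _ => o = .le
  | .dLower _ o _ _ => o = .le
  | _ => True

/-- All atomic constraints in guards of `A` use the weak inequality `≤`. -/
def weakGuards {Q X : Type} (A : UTA Q X) : Prop :=
  ∀ t ∈ A.trans, ∀ φ ∈ t.guard, φ.isWeak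

/-- A context: an atomic constraint with a hole for the constant. -/
inductive Ctx (X : Type) where
  | upper (x : X)      -- x ≤ ·
  | lower (x : X)      -- · ≤ x
  | dUpper (x y : X)   -- x - y ≤ ·
  | dLower (x y : X)   -- · ≤ x - y

def Ctx.fill {X : Type} : Ctx X → ℕ → AC X
  | .upper x, c => .upper x .le c
  | .lower x, c => .lower c .le x
  | .dUpper x y, c => .dUpper x y .le c
  | .dLower x y, c => .dLower c .le x y

/-- Propagation sequence `(q_i, ctx_i[c_i]) → ⋯ → (q_j, ctx_j[c_j])`. -/
def PropSeq {Q X : Type} (A : UTA Q X) (i j : ℕ) (qs : ℕ → Q) (ctxs : ℕ → Ctx X)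
    (cs : ℕ → ℕ) : Prop :=
  ∀ k, i ≤ k → k < j → ∃ t ∈ A.trans, t.src = qs (k + 1) ∧ t.tgt = qs k ∧
    (ctxs (k + 1)).fill (cs (k + 1)) = wp ((ctxs k).fill (cs k)) t.guard t.update

/-! If `v x ◁ d` and `v x < v' x`, delaying until `v' x` reaches `d` separates the two
valuations on `x ◁ d`. The lower-bound case reduces to this one by complementation:
`¬ (d ◁ x)` is the upper bound `x ◁' d` for the dual comparison `◁'`. -/

def Ineq.dual : Ineq → Ineq
  | .lt => .le
  | .le => .lt

theorem Ineq.dual_holds_iff_not (o : Ineq) (a b : ℝ) : o.dual.holds a b ↔ ¬ o.holds b a := by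
  cases o <;> simp [Ineq.dual, Ineq.holds]

theorem Ineq.holds_of_le_left {o : Ineq} {a a' c : ℝ} (h : a' ≤ a) (ha : o.holds a c) :
    o.holds a' c := by
  cases o
  · exact lt_of_le_of_lt h ha
  · exact h.trans ha

theorem Ineq.forall_holds_add_left_imp_iff (o : Ineq) (a a' c : ℝ) :
    (∀ δ : ℝ, 0 ≤ δ → o.holds (a + δ) c → o.holds (a' + δ) c) ↔ ¬ o.holds a c ∨ a' ≤ a := by
  constructor
  · intro h
    by_contra! hc
    obtain ⟨ha, hlt⟩ := hc
    cases o with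
    | lt =>
      have hac : a < c := ha
      have hsep : a + max 0 (c - a') < c := by
        rw [← lt_sub_iff_add_lt', max_lt_iff]
        constructor <;> linarith
      have hsat : a' + max 0 (c - a') < c := h _ (le_max_left _ _) hsep
      linarith [le_max_right 0 (c - a')]
    | le =>
      have hac : a ≤ c := ha
      have hsat : a' + (c - a) ≤ c := h _ (sub_nonneg.2 hac) (by simp [Ineq.holds])
      linarith
  · rintro (h | h) δ hδ hs
    · exact absurd (Ineq.holds_of_le_left (le_add_of_nonneg_right hδ) hs) h
    · exact Ineq.holds_of_le_left (by linarith) hs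

theorem Ineq.forall_holds_add_right_imp_iff (o : Ineq) (a a' c : ℝ) :
    (∀ δ : ℝ, 0 ≤ δ → o.holds c (a + δ) → o.holds c (a' + δ)) ↔ o.holds c a' ∨ a ≤ a' :=
  calc _ ↔ ∀ δ : ℝ, 0 ≤ δ → o.dual.holds (a' + δ) c → o.dual.holds (a + δ) c := by
        simp only [Ineq.dual_holds_iff_not, not_imp_not]
    _ ↔ _ := by rw [Ineq.forall_holds_add_left_imp_iff, Ineq.dual_holds_iff_not, not_not]

section Simulation

variable {X : Type} (v v' : Val X)

theorem simS_singleton_iff (φ : AC X) :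
    simS {φ} v v' ↔ ∀ δ : NNReal, AC.sat (delay v δ) φ → AC.sat (delay v' δ) φ := by
  simp [simS]

theorem simS_upper_iff (x : X) (o : Ineq) (d : ℕ) :
    simS {AC.upper x o d} v v' ↔
      ∀ δ : ℝ, 0 ≤ δ → o.holds (v x + δ) d → o.holds (v' x + δ) d := by
  rw [simS_singleton_iff, NNReal.forall]
  rfl

theorem simS_lower_iff (x : X) (o : Ineq) (d : ℕ) :
    simS {AC.lower d o x} v v' ↔
      ∀ δ : ℝ, 0 ≤ δ → o.holds d (v x + δ) → o.holds d (v' x + δ) := by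
  rw [simS_singleton_iff, NNReal.forall]
  rfl

end Simulation

theorem stmt1_general {X : Type} (v v' : Val X) (x : X) (d : ℕ) (o : Ineq) :
    (simS {AC.upper x o d} v v' ↔ (¬ AC.sat v (AC.upper x o d) ∨ v' x ≤ v x)) ∧
    (simS {AC.lower d o x} v v' ↔ (AC.sat v' (AC.lower d o x) ∨ v x ≤ v' x)) := by
  rw [simS_upper_iff, simS_lower_iff, Ineq.forall_holds_add_left_imp_iff,
    Ineq.forall_holds_add_right_imp_iff]
  exact ⟨Iff.rfl, Iff.rfl⟩

/-- LU-like characterization of the preorder for non-diagonal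
atomic constraints. -/
theorem stmt1 {X : Type} [Fintype X] (v v' : Val X) (x : X) (d : ℕ) (o : Ineq) :
    (simS {AC.upper x o d} v v' ↔ (¬ AC.sat v (AC.upper x o d) ∨ v' x ≤ v x)) ∧
    (simS {AC.lower d o x} v v' ↔ (AC.sat v' (AC.lower d o x) ∨ v x ≤ v' x)) :=
  stmt1_general v v' x d o
end

section
/- Let (g, up) be a guard–update pair, φ an atomic constraint, and v, v' valuations such that v ⊨ g and v ⊑_{C_g} v', where C_g is the set of atomic constraints of g. If v ⊑_{wp(φ, g, up)} v' then v ⊑_{up⁻¹(φ)} v'. -/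
open Classical

/-! Delaying `v` until it reaches an upper bound `x ◁ c` of the guard shows that
`v ⊑_{x ◁ c} v'` forces `v' x ≤ v x` (Case 1); delaying it up to `c` shows that `v ⊑_{c ≤ x} v'`
forces `v x ≤ v' x` as soon as `v x ≤ c`, which holds for the least upper bound `c` on `x` in the
guard (Case 2). In Case 3 the guard places either `v'` strictly on the satisfying side of the
diagonal constraint or `v` strictly on its violating side, and diagonal constraints do not change
under delays. -/

namespace Ineq

variable {o : Ineq} {a a' b b' : ℝ}

lemma le_of_holds (h : o.holds a b) : a ≤ b := by
  cases o
  exacts [le_of_lt h, h]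

lemma holds_of_lt (h : a < b) : o.holds a b := by
  cases o
  exacts [h, h.le]

lemma holds_of_le_of_holds (h : a' ≤ a) (hh : o.holds a b) : o.holds a' b := by
  cases o
  exacts [lt_of_le_of_lt h hh, le_trans h hh]

lemma holds_of_holds_of_le (hh : o.holds a b) (h : b ≤ b') : o.holds a b' := by
  cases o
  exacts [lt_of_lt_of_le hh h, le_trans hh h]

lemma le_of_forall_holds_add {c : ℝ} (ha : o.holds a c)
    (h : ∀ δ : NNReal, o.holds (a + δ) c → o.holds (b + δ) c) : b ≤ a := by
  cases o
  case le =>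
    have hδ := h (c - a).toNNReal
    rw [Real.coe_toNNReal _ (sub_nonneg.2 (le_of_holds ha))] at hδ
    have hb : b + (c - a) ≤ c := hδ (by simp [holds])
    linarith
  case lt =>
    by_contra! hab
    -- delay `b` exactly up to `c`, or not at all if it is already past `c`
    have hb := h (c - b).toNNReal
    simp only [holds, Real.coe_toNNReal'] at ha hb
    rcases le_total (c - b) 0 with hcb | hcb
    · rw [max_eq_right hcb] at hb
      linarith [hb (by linarith)]
    · rw [max_eq_left hcb] at hb
      linarith [hb (by linarith)]

end Ineq

section Simulation

variable {X : Type}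

@[simp]
lemma coe_delay_apply (v : Val X) (δ : NNReal) (x : X) :
    ((delay v δ x : NNReal) : ℝ) = v x + δ :=
  NNReal.coe_add _ _

@[simp]
lemma delay_zero (v : Val X) : delay v 0 = v := by
  funext x
  simp [delay]

lemma sat_delay_dUpper_iff {v : Val X} {δ : NNReal} {x y : X} {o : Ineq} {c : ℕ} :
    AC.sat (delay v δ) (.dUpper x y o c) ↔ AC.sat v (.dUpper x y o c) := by
  simp [AC.sat]

lemma sat_delay_dLower_iff {v : Val X} {δ : NNReal} {x y : X} {o : Ineq} {c : ℕ} :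
    AC.sat (delay v δ) (.dLower c o x y) ↔ AC.sat v (.dLower c o x y) := by
  simp [AC.sat]

namespace simS

variable {G H : Set (AC X)} {v v' : Val X}

lemma mono (hGH : G ⊆ H) (h : simS H v v') : simS G v v' :=
  fun δ φ hφ => h δ φ (hGH hφ)

lemma sat_of_sat (h : simS G v v') {φ : AC X} (hφ : φ ∈ G) (hv : AC.sat v φ) :
    AC.sat v' φ := by
  simpa using h 0 φ hφ (by simpa using hv)

lemma upper_of_le {x : X} {o : Ineq} {c : ℕ} (hx : (v' x : ℝ) ≤ v x) :
    simS {.upper x o c} v v' := by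
  rintro δ _ rfl hv
  simp only [AC.sat, coe_delay_apply] at hv ⊢
  exact Ineq.holds_of_le_of_holds (by linarith) hv

lemma lower_of_le {x : X} {o : Ineq} {c : ℕ} (hx : (v x : ℝ) ≤ v' x) :
    simS {.lower c o x} v v' := by
  rintro δ _ rfl hv
  simp only [AC.sat, coe_delay_apply] at hv ⊢
  exact Ineq.holds_of_holds_of_le hv (by linarith)

lemma dUpper_of {x y : X} {o : Ineq} {d : ℕ}
    (h : (v' x : ℝ) - v' y < d ∨ (d : ℝ) < v x - v y) : simS {.dUpper x y o d} v v' := by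
  rintro δ _ rfl hv
  rw [sat_delay_dUpper_iff] at hv ⊢
  rcases h with h | h
  · exact Ineq.holds_of_lt h
  · exact absurd (Ineq.le_of_holds hv) (not_le.2 h)

lemma dLower_of {x y : X} {o : Ineq} {d : ℕ}
    (h : (d : ℝ) < v' x - v' y ∨ (v x : ℝ) - v y < d) : simS {.dLower d o x y} v v' := by
  rintro δ _ rfl hv
  rw [sat_delay_dLower_iff] at hv ⊢
  rcases h with h | h
  · exact Ineq.holds_of_lt h
  · exact absurd (Ineq.le_of_holds hv) (not_le.2 h)

lemma le_of_upper {x : X} {o : Ineq} {c : ℕ} (hv : AC.sat v (.upper x o c))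
    (h : simS {.upper x o c} v v') : (v' x : ℝ) ≤ v x :=
  Ineq.le_of_forall_holds_add hv fun δ hvδ => by
    simpa [AC.sat] using h δ _ rfl (by simpa [AC.sat] using hvδ)

lemma le_of_lower {x : X} {m : ℕ} (hv : (v x : ℝ) ≤ m) (h : simS {.lower m .le x} v v') :
    (v x : ℝ) ≤ v' x := by
  have hvm := h ((m : ℝ) - v x).toNNReal _ rfl
  simp only [AC.sat, Ineq.holds, coe_delay_apply, Real.coe_toNNReal _ (sub_nonneg.2 hv)] at hvm
  linarith [hvm (by linarith)]

end simS

variable {g : Guard X} {v v' : Val X}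

lemma le_of_hasUpperG (hg : satG v g) (hsim : simS {ψ | ψ ∈ g} v v') {x : X}
    (hU : hasUpperG g x) : (v' x : ℝ) ≤ v x := by
  obtain ⟨o, c, hmem⟩ := hU
  exact (hsim.mono (Set.singleton_subset_iff.2 hmem)).le_of_upper (hg _ hmem)

lemma le_minUpperG (hg : satG v g) {x : X} (hU : hasUpperG g x) :
    (v x : ℝ) ≤ minUpperG g x := by
  obtain ⟨o, c, hmem⟩ := hU
  obtain ⟨o', hmin⟩ : minUpperG g x ∈ {c | ∃ o, AC.upper x o c ∈ g} := Nat.sInf_mem ⟨c, o, hmem⟩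
  exact Ineq.le_of_holds (hg _ hmin)

lemma case3G_dUpper (hg : satG v g) (hsim : simS {ψ | ψ ∈ g} v v') {x y : X} {d : ℕ}
    (hC : case3G g x y d) : (v' x : ℝ) - v' y < d ∨ (d : ℝ) < v x - v y := by
  rcases hC with ⟨o, c, hmem, hcd⟩ | ⟨o, c, hmem, hcd⟩ | ⟨o, e, hmem, hde⟩
  · have hv'x := le_of_hasUpperG hg hsim ⟨o, c, hmem⟩
    have hvx : (v x : ℝ) ≤ c := Ineq.le_of_holds (hg _ hmem)
    left
    linarith [(v' y).coe_nonneg, (Nat.cast_lt (α := ℝ)).2 hcd]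
  · have hv' : (v' x : ℝ) - v' y ≤ c := Ineq.le_of_holds (hsim.sat_of_sat hmem (hg _ hmem))
    left
    linarith [(Nat.cast_lt (α := ℝ)).2 hcd]
  · have hv : (e : ℝ) ≤ v x - v y := Ineq.le_of_holds (hg _ hmem)
    right
    linarith [(Nat.cast_lt (α := ℝ)).2 hde]

lemma case3G_dLower (hg : satG v g) (hsim : simS {ψ | ψ ∈ g} v v') {x y : X} {d : ℕ}
    (hC : case3G g x y d) : (d : ℝ) < v' x - v' y ∨ (v x : ℝ) - v y < d := by
  rcases hC with ⟨o, c, hmem, hcd⟩ | ⟨o, c, hmem, hcd⟩ | ⟨o, e, hmem, hde⟩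
  · have hvx : (v x : ℝ) ≤ c := Ineq.le_of_holds (hg _ hmem)
    right
    linarith [(v y).coe_nonneg, (Nat.cast_lt (α := ℝ)).2 hcd]
  · have hv : (v x : ℝ) - v y ≤ c := Ineq.le_of_holds (hg _ hmem)
    right
    linarith [(Nat.cast_lt (α := ℝ)).2 hcd]
  · have hv' : (e : ℝ) ≤ v' x - v' y := Ineq.le_of_holds (hsim.sat_of_sat hmem (hg _ hmem))
    left
    linarith [(Nat.cast_lt (α := ℝ)).2 hde]

end Simulation

theorem stmt2_general {X : Type} (g : Guard X) (up : Update X) (φ : AC X)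
    (v v' : Val X) (hg : satG v g) (hsim : simS {ψ | ψ ∈ g} v v')
    (h : simS {wp φ g up} v v') :
    simS {upInvA up φ} v v' := by
  unfold wp at h
  rcases hE : upInvA up φ with _ | _ | ⟨x, o, d⟩ | ⟨d, o, x⟩ | ⟨x, y, o, d⟩ | ⟨d, o, x, y⟩ <;>
    simp only [hE] at h
  · exact h
  · exact h
  · split_ifs at h with hU
    · exact simS.upper_of_le (le_of_hasUpperG hg hsim hU)
    · exact h
  · split_ifs at h with hC
    · exact simS.lower_of_le (h.le_of_lower (le_minUpperG hg hC.1))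
    · exact h
  · split_ifs at h with hC
    · exact simS.dUpper_of (case3G_dUpper hg hsim hC)
    · exact h
  · split_ifs at h with hC
    · exact simS.dLower_of (case3G_dLower hg hsim hC)
    · exact h

/-- Proposition: soundness of `wp`. If `v ⊨ g`, `v ⊑_{C_g} v'`
and `v ⊑_{wp(φ,g,up)} v'`, then `v ⊑_{up⁻¹(φ)} v'`. -/
theorem stmt2 {X : Type} [Fintype X] (g : Guard X) (up : Update X) (φ : AC X)
    (v v' : Val X) (hg : satG v g) (hsim : simS {ψ | ψ ∈ g} v v')
    (h : simS {wp φ g up} v v') :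
    simS {upInvA up φ} v v' :=
  stmt2_general g up φ v v' hg hsim h
end

section
/- Let A be a timed automaton with syntactically bounded subtraction and let M̄ be the maximum constant occurring among the guards and updates of A. Then the map assigning to every state of A the (finite) set of all atomic constraints over X with constant at most M̄ is a reduced G-map for A. -/
open Classical

/-! The wp-transformer first substitutes the update into the constraint. For a timed automaton
with subtraction, this substitution can push a constant above `max (cst φ) M̄` only by
replacing `x` with `x - c` where `x` occurs positively; since subtraction is syntactically
bounded, the guard then bounds `x` from above by some constant `c' ≤ M̄`, and the reduction
clauses of `wp` either drop the constraint or lower its constant to at most `c'`. -/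

/-- The clock occurring with positive sign in an atomic constraint. -/
def AC.lead {X : Type} : AC X → Option X
  | .upper x _ _ => some x
  | .lower _ _ x => some x
  | .dUpper x _ _ _ => some x
  | .dLower _ _ x _ => some x
  | _ => none

instance : Finite Ineq :=
  Finite.of_injective (fun o : Ineq => match o with | .lt => true | .le => false)
    (by rintro (_ | _) (_ | _) <;> simp)

theorem AC.finite_setOf_cst_le {X : Type} [Finite X] (M : ℕ) :
    {φ : AC X | φ.cst ≤ M}.Finite := by
  let C := Fin (M + 1)
  let ofCode : (Bool ⊕ (X × Ineq × C) ⊕ (X × Ineq × C)) ⊕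
      ((X × X × Ineq × C) ⊕ (X × X × Ineq × C)) → AC X
    | .inl (.inl b) => if b then .tt else .ff
    | .inl (.inr (.inl (x, o, c))) => .upper x o c
    | .inl (.inr (.inr (x, o, c))) => .lower c o x
    | .inr (.inl (x, y, o, c)) => .dUpper x y o c
    | .inr (.inr (x, y, o, c)) => .dLower c o x y
  refine (Set.finite_range ofCode).subset fun φ (hφ : φ.cst ≤ M) => ?_
  have hc : φ.cst < M + 1 := Nat.lt_succ_of_le hφ
  cases φ with
  | tt => exact ⟨.inl (.inl true), rfl⟩
  | ff => exact ⟨.inl (.inl false), rfl⟩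
  | upper x o c => exact ⟨.inl (.inr (.inl (x, o, ⟨c, hc⟩))), rfl⟩
  | lower c o x => exact ⟨.inl (.inr (.inr (x, o, ⟨c, hc⟩))), rfl⟩
  | dUpper x y o c => exact ⟨.inr (.inl (x, y, o, ⟨c, hc⟩)), rfl⟩
  | dLower c o x y => exact ⟨.inr (.inr (x, y, o, ⟨c, hc⟩)), rfl⟩

section wp

variable {X : Type} (φ : AC X) (g : Guard X) (up : Update X)

theorem minUpperG_le {x : X} {o : Ineq} {c : ℕ} (h : AC.upper x o c ∈ g) :
    minUpperG g x ≤ c :=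
  Nat.sInf_le ⟨o, h⟩

theorem cst_wp_le_cst_upInvA : (wp φ g up).cst ≤ (upInvA up φ).cst := by
  unfold wp
  split <;> (try split_ifs) <;> simp_all [AC.cst]; omega

theorem cst_wp_le_of_upper_mem {x : X} {o : Ineq} {c : ℕ} (hg : AC.upper x o c ∈ g)
    (hx : (upInvA up φ).lead = some x) : (wp φ g up).cst ≤ c := by
  have hmin := minUpperG_le g hg
  have hu : hasUpperG g x := ⟨o, c, hg⟩
  unfold wp
  generalize upInvA up φ = ψ at hx ⊢
  cases ψ <;> simp only [AC.lead, Option.some.injEq, reduceCtorEq] at hx <;> subst hx <;>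
    dsimp only
  · simp [hu, AC.cst]
  · split_ifs with h <;> simp only [hu, true_and, AC.cst] at h ⊢ <;> omega
  all_goals
    split_ifs with h
    · simp [AC.cst]
    · simp only [AC.cst]
      by_contra hlt
      exact h (Or.inl ⟨o, c, hg, by omega⟩)

theorem cst_upInvA_le_or_lead {N : ℕ}
    (hup : ∀ x, up x = .const 0 ∨ ∃ c ≤ N, up x = .clock x (-(c : ℤ))) :
    (upInvA up φ).cst ≤ max φ.cst N ∨
      ∃ x, ∃ c : ℕ, 0 < c ∧ up x = .clock x (-(c : ℤ)) ∧ (upInvA up φ).lead = some x := by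
  cases φ with
  | tt | ff => simp [upInvA, AC.cst]
  | upper x o d | lower d o x =>
    rcases hup x with hx | ⟨c, hcN, hx⟩
    · left; simp only [upInvA, hx]; split_ifs <;> simp [AC.cst]
    · rcases Nat.eq_zero_or_pos c with rfl | hc
      · left; simp only [upInvA, hx]; split_ifs <;> simp only [AC.cst] <;> omega
      · right
        refine ⟨x, c, hc, hx, ?_⟩
        simp only [upInvA, hx]
        split_ifs <;> first | rfl | omega
  | dUpper x y o d | dLower d o x y =>
    rcases hup x with hx | ⟨c, hcN, hx⟩ <;> rcases hup y with hy | ⟨e, heN, hy⟩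
    · left; simp only [upInvA, hx, hy]; split_ifs <;> simp [AC.cst]
    · left; simp only [upInvA, hx, hy]; split_ifs <;> simp only [AC.cst] <;> omega
    all_goals
      rcases Nat.eq_zero_or_pos c with rfl | hc
      · left; simp only [upInvA, hx, hy]; split_ifs <;> simp only [AC.cst] <;> omega
      · simp only [upInvA, hx, hy]
        split_ifs <;> first
          | (left; simp only [AC.cst]; omega)
          | (right; exact ⟨x, c, hc, hx, rfl⟩)

end wp

section UTA

variable {Q X : Type} {A : UTA Q X} {t : UTrans Q X}

theorem cst_le_maxGuardConst (ht : t ∈ A.trans) {φ : AC X} (hφ : φ ∈ t.guard) :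
    φ.cst ≤ maxGuardConst A :=
  List.le_max_of_le' 0 (List.mem_map_of_mem ht)
    (List.le_max_of_le' 0 (List.mem_map_of_mem hφ) le_rfl)

theorem cst_update_le_maxUpdateConst [Fintype X] (ht : t ∈ A.trans) (x : X) :
    (t.update x).cst ≤ maxUpdateConst A :=
  List.le_max_of_le' 0 (List.mem_map_of_mem ht)
    (Finset.le_sup (f := fun x => (t.update x).cst) (Finset.mem_univ x))

theorem IsSubtractionTA.update_eq [Fintype X] (h : IsSubtractionTA A) (ht : t ∈ A.trans)
    (x : X) :
    t.update x = .const 0 ∨ ∃ c ≤ maxUpdateConst A, t.update x = .clock x (-(c : ℤ)) := by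
  refine (h t ht x).imp_right fun ⟨c, hc⟩ => ⟨c, ?_, hc⟩
  simpa [hc, Rhs.cst] using cst_update_le_maxUpdateConst ht x

theorem IsSynBoundedSub.cst_wp_le [Fintype X] (h : IsSynBoundedSub A) (ht : t ∈ A.trans)
    {φ : AC X} (hφ : φ.cst ≤ max (maxGuardConst A) (maxUpdateConst A)) :
    (wp φ t.guard t.update).cst ≤ max (maxGuardConst A) (maxUpdateConst A) := by
  rcases cst_upInvA_le_or_lead φ t.update (h.1.update_eq ht) with
    hle | ⟨x, c, hc, hx, hlead⟩
  · exact (cst_wp_le_cst_upInvA _ _ _).trans (hle.trans (max_le hφ (le_max_right _ _)))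
  · obtain ⟨o, c', hg⟩ := h.2 t ht x c hc hx
    exact (cst_wp_le_of_upper_mem _ _ _ hg hlead).trans
      ((cst_le_maxGuardConst ht hg).trans (le_max_left _ _))

end UTA

theorem stmt9_general {Q X : Type} [Fintype X] (A : UTA Q X)
    (h : IsSynBoundedSub A) :
    ({φ : AC X | AC.cst φ ≤ max (maxGuardConst A) (maxUpdateConst A)}).Finite ∧
    IsRedGMap A
      (fun _ => {φ : AC X | AC.cst φ ≤ max (maxGuardConst A) (maxUpdateConst A)}) := by
  refine ⟨AC.finite_setOf_cst_le _, fun t ht => ⟨fun φ hφ => ?_, fun _ => ?_, fun φ hφ => ?_⟩⟩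
  · exact (cst_le_maxGuardConst ht hφ).trans (le_max_left _ _)
  · exact h.cst_wp_le ht (by simp [AC.cst])
  · exact h.cst_wp_le ht hφ

/-- For a timed automaton with syntactically bounded subtraction,
the map assigning to every state the (finite) set of all atomic constraints with
constant at most the maximum constant `M̄` of `A` is a reduced G-map. -/
theorem stmt9 {Q X : Type} [Fintype Q] [Fintype X] (A : UTA Q X)
    (h : IsSynBoundedSub A) :
    ({φ : AC X | AC.cst φ ≤ max (maxGuardConst A) (maxUpdateConst A)}).Finite ∧
    IsRedGMap A
      (fun _ => {φ : AC X | AC.cst φ ≤ max (maxGuardConst A) (maxUpdateConst A)}) :=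
  stmt9_general A h
end

section
/- Let A be a UTA, G₁ its smallest G-map and G₂ its smallest reduced G-map. If G₁ assigns a finite set to every state then so does G₂; moreover, for every state q: every upper-bound constraint x ◁ c in G₂(q) belongs to G₁(q); for every lower-bound constraint c ◁ x in G₂(q) there is a constraint c' ◁' x in G₁(q) with c ≤ c'; and every diagonal constraint in G₂(q) belongs to G₁(q). In particular L(G₂(q))(x) ≤ L(G₁(q))(x) and U(G₂(q))(x) ≤ U(G₁(q))(x) for all q and x, and G₂(q)^d ⊆ G₁(q)^d for all q. -/
open Classical

/-
Say that `φ` is dominated by `ψ` if `φ = ψ`, `φ ∈ {⊤, ⊥}`, or `φ = (c ◁ x)` and `ψ = (c' ◁' x)`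
with `c ≤ c'`. Then `wp(φ, g, up)` is dominated by `up⁻¹(φ)`: it is `⊤`, `up⁻¹(φ)` itself, or
`up⁻¹(φ) = (d ◁ x)` with its constant lowered. Since `up⁻¹` preserves domination, the sets of
constraints dominated by `G₁(q)` form a reduced G-map, which therefore contains `G₂`. Only
finitely many constraints are dominated by a given one, and an upper-bound or diagonal constraint
is dominated only by itself.
-/

instance inst_s13 : Finite Ineq :=
  Finite.of_injective (fun o => match o with | .lt => true | .le => false)
    (by intro a b; cases a <;> cases b <;> simp)

variable {Q X : Type}

inductive AC.DominatedBy : AC X → AC X → Prop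
  | refl (φ : AC X) : AC.DominatedBy φ φ
  | tt (ψ : AC X) : AC.DominatedBy .tt ψ
  | ff (ψ : AC X) : AC.DominatedBy .ff ψ
  | lower {c c' : ℕ} (o o' : Ineq) (x : X) (h : c ≤ c') :
      AC.DominatedBy (.lower c o x) (.lower c' o' x)

namespace AC.DominatedBy

theorem trans {φ ψ χ : AC X} (h₁ : φ.DominatedBy ψ) (h₂ : ψ.DominatedBy χ) :
    φ.DominatedBy χ := by
  cases h₁ with
  | refl => exact h₂
  | tt => exact .tt χ
  | ff => exact .ff χ
  | lower o o' x h =>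
    cases h₂ with
    | refl => exact .lower o o' x h
    | lower _ o'' _ h' => exact .lower o o'' x (h.trans h')

theorem upInvA {φ ψ : AC X} (up : Update X) (h : φ.DominatedBy ψ) :
    (upInvA up φ).DominatedBy (upInvA up ψ) := by
  cases h with
  | refl => exact .refl _
  | tt => exact .tt _
  | ff => exact .ff _
  | @lower c c' o o' x hc =>
    rcases hx : up x with a | ⟨y, d⟩ <;> simp only [_root_.upInvA, hx]
    · split_ifs <;> first | exact .tt _ | exact .ff _
    · by_cases hd : (c : ℤ) - d < 0
      · rw [if_pos hd]; exact .tt _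
      · rw [if_neg hd, if_neg (by omega)]
        exact .lower o o' y (by omega)

end AC.DominatedBy

theorem wp_dominatedBy_upInvA (φ : AC X) (g : Guard X) (up : Update X) :
    (wp φ g up).DominatedBy (upInvA up φ) := by
  rcases hψ : upInvA up φ with _ | _ | _ | ⟨d, o, x⟩ | _ | _ <;> simp only [wp, hψ]
  case lower =>
    split_ifs with hcase
    · exact .lower _ _ _ hcase.2.le
    · exact .refl _
  all_goals (try split_ifs) <;> first | exact .tt _ | exact .refl _

def dominatedSet (G : Set (AC X)) : Set (AC X) := {φ | ∃ ψ ∈ G, φ.DominatedBy ψ}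

theorem finite_setOf_dominatedBy (ψ : AC X) : {φ : AC X | φ.DominatedBy ψ}.Finite := by
  have hbase : ({ψ, .tt, .ff} : Set (AC X)).Finite := Set.toFinite _
  cases ψ with
  | lower c' o' x =>
    refine (hbase.union (((Set.finite_Iic c').prod Set.finite_univ).image
      fun p : ℕ × Ineq => AC.lower p.1 p.2 x)).subset ?_
    rintro φ (_ | _ | _ | ⟨o, _, _, hc⟩)
    all_goals first
      | exact .inr ⟨(_, o), ⟨hc, trivial⟩, rfl⟩
      | exact .inl (by simp)
  | _ =>
    refine hbase.subset ?_
    rintro φ (_ | _ | _) <;> simp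

theorem finite_dominatedSet {G : Set (AC X)} (hG : G.Finite) : (dominatedSet G).Finite := by
  have : dominatedSet G = ⋃ ψ ∈ G, {φ | φ.DominatedBy ψ} := by
    ext φ; simp [dominatedSet]
  rw [this]
  exact hG.biUnion fun ψ _ => finite_setOf_dominatedBy ψ

theorem isGMap_minGMap (A : UTA Q X) : IsGMap A (minGMap A) := fun t ht =>
  ⟨fun φ hφ => Set.mem_iInter₂.2 fun _ hG => (hG t ht).1 φ hφ,
    fun x => Set.mem_iInter₂.2 fun _ hG => (hG t ht).2.1 x,
    fun φ hφ => Set.mem_iInter₂.2 fun G hG => (hG t ht).2.2 φ (Set.mem_iInter₂.1 hφ G hG)⟩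

theorem IsGMap.isRedGMap_dominatedSet {A : UTA Q X} {G : Q → Set (AC X)} (hG : IsGMap A G) :
    IsRedGMap A fun q => dominatedSet (G q) := by
  intro t ht
  obtain ⟨hguard, hclock, hpre⟩ := hG t ht
  refine ⟨fun φ hφ => ⟨φ, hguard φ hφ, .refl φ⟩,
    fun x => ⟨_, hclock x, wp_dominatedBy_upInvA _ _ _⟩, ?_⟩
  rintro φ ⟨ψ, hψ, hφψ⟩
  exact ⟨_, hpre ψ hψ, (wp_dominatedBy_upInvA φ _ _).trans (hφψ.upInvA _)⟩

theorem minRedGMap_subset_dominatedSet (A : UTA Q X) (q : Q) :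
    minRedGMap A q ⊆ dominatedSet (minGMap A q) :=
  Set.iInter₂_subset (fun q => dominatedSet (minGMap A q))
    (isGMap_minGMap A).isRedGMap_dominatedSet

section SubsetDominatedSet

variable {G G' : Set (AC X)}

theorem upper_mem_of_subset_dominatedSet (h : G ⊆ dominatedSet G') {x : X} {o : Ineq} {c : ℕ}
    (hc : AC.upper x o c ∈ G) : AC.upper x o c ∈ G' := by
  obtain ⟨ψ, hψ, hcψ⟩ := h hc
  cases hcψ
  exact hψ

theorem exists_lower_mem_of_subset_dominatedSet (h : G ⊆ dominatedSet G') {x : X} {o : Ineq}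
    {c : ℕ} (hc : AC.lower c o x ∈ G) : ∃ c' o', AC.lower c' o' x ∈ G' ∧ c ≤ c' := by
  obtain ⟨ψ, hψ, hcψ⟩ := h hc
  cases hcψ with
  | refl => exact ⟨c, o, hψ, le_rfl⟩
  | lower _ o' _ hcc' => exact ⟨_, o', hψ, hcc'⟩

theorem mem_of_subset_dominatedSet_of_isDiag (h : G ⊆ dominatedSet G') {φ : AC X}
    (hφG : φ ∈ G) (hφ : φ.isDiag) : φ ∈ G' := by
  obtain ⟨ψ, hψ, hφψ⟩ := h hφG
  cases hφψ <;> first | exact hψ | exact hφ.elim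

theorem Lb_le_of_subset_dominatedSet (h : G ⊆ dominatedSet G') (x : X) : Lb G x ≤ Lb G' x := by
  refine iSup₂_le fun c ⟨_, hc⟩ => ?_
  obtain ⟨c', o', hc', hcc'⟩ := exists_lower_mem_of_subset_dominatedSet h hc
  exact le_trans (by exact_mod_cast hcc')
    (le_iSup₂ (f := fun (c : ℕ) (_ : c ∈ {c : ℕ | ∃ o, AC.lower c o x ∈ G'}) =>
      ((c : ℕ∞) : WithBot ℕ∞)) c' ⟨o', hc'⟩)

theorem Ub_le_of_subset_dominatedSet (h : G ⊆ dominatedSet G') (x : X) : Ub G x ≤ Ub G' x :=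
  iSup₂_le fun c ⟨o, hc⟩ =>
    le_iSup₂ (f := fun (c : ℕ) (_ : c ∈ {c : ℕ | ∃ o, AC.upper x o c ∈ G'}) =>
      ((c : ℕ∞) : WithBot ℕ∞)) c ⟨o, upper_mem_of_subset_dominatedSet h hc⟩

theorem diagOf_subset_of_subset_dominatedSet (h : G ⊆ dominatedSet G') :
    diagOf G ⊆ diagOf G' :=
  fun _ hφ => ⟨mem_of_subset_dominatedSet_of_isDiag h hφ.1 hφ.2, hφ.2⟩

end SubsetDominatedSet

theorem stmt13_general {Q X : Type} (A : UTA Q X)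
    (hfin : ∀ q, (minGMap A q).Finite) :
    (∀ q, (minRedGMap A q).Finite) ∧
    (∀ q x o c, AC.upper x o c ∈ minRedGMap A q → AC.upper x o c ∈ minGMap A q) ∧
    (∀ q x o c, AC.lower c o x ∈ minRedGMap A q →
        ∃ c' o', AC.lower c' o' x ∈ minGMap A q ∧ c ≤ c') ∧
    (∀ q φ, φ ∈ minRedGMap A q → AC.isDiag φ → φ ∈ minGMap A q) ∧
    (∀ q x, Lb (minRedGMap A q) x ≤ Lb (minGMap A q) x ∧
            Ub (minRedGMap A q) x ≤ Ub (minGMap A q) x) ∧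
    (∀ q, diagOf (minRedGMap A q) ⊆ diagOf (minGMap A q)) := by
  have hsub := minRedGMap_subset_dominatedSet A
  exact ⟨fun q => (finite_dominatedSet (hfin q)).subset (hsub q),
    fun q _ _ _ => upper_mem_of_subset_dominatedSet (hsub q),
    fun q _ _ _ => exists_lower_mem_of_subset_dominatedSet (hsub q),
    fun q _ => mem_of_subset_dominatedSet_of_isDiag (hsub q),
    fun q x => ⟨Lb_le_of_subset_dominatedSet (hsub q) x, Ub_le_of_subset_dominatedSet (hsub q) x⟩,
    fun q => diagOf_subset_of_subset_dominatedSet (hsub q)⟩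

/-- Theorem `sound-finite-reduced-finite`. If the smallest
(non-reduced) G-map `G₁` of `A` is finite then so is the smallest reduced G-map
`G₂`; moreover upper-bound and diagonal constraints of `G₂` appear in `G₁`, each
lower-bound constraint `c ◁ x` of `G₂` is dominated by some `c' ◁' x` in `G₁` with
`c ≤ c'`; in particular `LU(G₂) ≤ LU(G₁)` and `G₂^d ⊆ G₁^d`. -/
theorem stmt13 {Q X : Type} [Fintype Q] [Fintype X] (A : UTA Q X)
    (hfin : ∀ q, (minGMap A q).Finite) :
    (∀ q, (minRedGMap A q).Finite) ∧
    (∀ q x o c, AC.upper x o c ∈ minRedGMap A q → AC.upper x o c ∈ minGMap A q) ∧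
    (∀ q x o c, AC.lower c o x ∈ minRedGMap A q →
        ∃ c' o', AC.lower c' o' x ∈ minGMap A q ∧ c ≤ c') ∧
    (∀ q φ, φ ∈ minRedGMap A q → AC.isDiag φ → φ ∈ minGMap A q) ∧
    (∀ q x, Lb (minRedGMap A q) x ≤ Lb (minGMap A q) x ∧
            Ub (minRedGMap A q) x ≤ Ub (minGMap A q) x) ∧
    (∀ q, diagOf (minRedGMap A q) ⊆ diagOf (minGMap A q)) :=
  stmt13_general A hfin
end
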